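/- arXiv:2203.17227 — 2 statements merged into one kernel-verified Lean document; each statement's English description precedes it below -/
import Mathlib

section
/- Let r₁, r₂, b > 0 with |r₁ − r₂| < b < r₁ + r₂. Set x₁ = (r₂² − r₁² − b²)/(2b), x₂ = b + x₁, ρ = √(r₁² − x₁²), α₁ = arccos(−x₁/r₁), α₂ = arccos(x₂/r₂). Then the area of the intersection of the two closed disks {x² + y² ≤ r₁²} and {(x+b)² + y² ≤ r₂²} equals α₂·r₂² + α₁·r₁² − ρ·b. -/
open Real MeasureTheory Set

/-! Slicing vertically, the lens is `{y² ≤ min (r₁² - x², r₂² - (x + b)²)}`, with chord length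
`2 √(min …)` at abscissa `x`. The radical axis `x = x₁` of the two circles cuts it into a cap of the
first disk (`x ≤ x₁`) and a cap of the second (`x ≥ x₁`), whose areas come from the primitive
`x √(r² - x²) - r² arccos (x / r)` of `2 √(r² - x²)`. Both circles cross the axis at height `ρ`,
so the two chord terms `x₁ ρ` and `-x₂ ρ` add up to `-b ρ`. -/

theorem volume_setOf_sq_le (m : ℝ) :
    volume {y : ℝ | y ^ 2 ≤ m} = ENNReal.ofReal (2 * √m) := by
  rcases le_or_gt 0 m with hm | hm
  · have hIcc : {y : ℝ | y ^ 2 ≤ m} = Icc (-√m) √m := by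
      ext y
      exact Real.sq_le hm
    rw [hIcc, Real.volume_Icc]
    ring_nf
  · have hempty : {y : ℝ | y ^ 2 ≤ m} = ∅ :=
      eq_empty_of_forall_notMem fun y hy => (hm.trans_le (sq_nonneg y)).not_ge hy
    simp [hempty, Real.sqrt_eq_zero'.mpr hm.le]

theorem volume_setOf_sq_le_eq_lintegral {g : ℝ → ℝ} (hg : Measurable g) :
    volume {p : ℝ × ℝ | p.2 ^ 2 ≤ g p.1} = ∫⁻ x, ENNReal.ofReal (2 * √(g x)) := by
  have hmeas : MeasurableSet {p : ℝ × ℝ | p.2 ^ 2 ≤ g p.1} :=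
    measurableSet_le (by fun_prop) (by fun_prop)
  rw [Measure.volume_eq_prod, Measure.prod_apply hmeas]
  simp only [preimage_ofPred_eq, volume_setOf_sq_le]

theorem volume_setOf_sq_le_eq_intervalIntegral {g : ℝ → ℝ} {a c : ℝ} (hg : Continuous g)
    (hac : a ≤ c) (hout : ∀ x ∉ Icc a c, g x ≤ 0) :
    volume {p : ℝ × ℝ | p.2 ^ 2 ≤ g p.1} = ENNReal.ofReal (∫ x in a..c, 2 * √(g x)) := by
  have hsupp : (fun x => ENNReal.ofReal (2 * √(g x))).support ⊆ Icc a c := fun x hx => by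
    by_contra hx'
    simp [Real.sqrt_eq_zero'.mpr (hout x hx')] at hx
  rw [volume_setOf_sq_le_eq_lintegral hg.measurable, ← setLIntegral_eq_of_support_subset hsupp,
    intervalIntegral.integral_of_le hac, ← integral_Icc_eq_integral_Ioc,
    ofReal_integral_eq_lintegral_ofReal
      (by fun_prop : Continuous fun x => 2 * √(g x)).integrableOn_Icc
      (ae_of_all _ fun x => by positivity)]

theorem hasDerivAt_mul_sqrt_sub_arccos {r x : ℝ} (hx : x ∈ Ioo (-r) r) :
    HasDerivAt (fun x => x * √(r ^ 2 - x ^ 2) - r ^ 2 * arccos (x / r))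
      (2 * √(r ^ 2 - x ^ 2)) x := by
  obtain ⟨hlt, hgt⟩ := hx
  have hr : 0 < r := by linarith
  have hpos : 0 < r ^ 2 - x ^ 2 := by nlinarith
  have hsqrt : HasDerivAt (fun x => √(r ^ 2 - x ^ 2)) (-x / √(r ^ 2 - x ^ 2)) x := by
    convert ((hasDerivAt_pow 2 x).const_sub (r ^ 2)).sqrt hpos.ne' using 1
    ring
  have harccos := (Real.hasDerivAt_arccos (x := x / r) (by rw [ne_eq, div_eq_iff hr.ne']; linarith)
    (by rw [ne_eq, div_eq_iff hr.ne']; linarith)).comp x ((hasDerivAt_id x).div_const r)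
  have hscale : √(1 - (x / r) ^ 2) = √(r ^ 2 - x ^ 2) / r := by
    rw [show 1 - (x / r) ^ 2 = (r ^ 2 - x ^ 2) / r ^ 2 by field_simp, Real.sqrt_div hpos.le,
      Real.sqrt_sq hr.le]
  refine (((hasDerivAt_id x).mul hsqrt).sub (harccos.const_mul (r ^ 2))).congr_deriv ?_
  rw [hscale, id]
  field_simp
  rw [Real.sq_sqrt hpos.le]
  ring

theorem integral_two_mul_sqrt_sq_sub_sq_to_right {r t : ℝ} (ht : t ∈ Icc (-r) r) :
    ∫ x in t..r, 2 * √(r ^ 2 - x ^ 2) = r ^ 2 * arccos (t / r) - t * √(r ^ 2 - t ^ 2) := by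
  rw [intervalIntegral.integral_eq_sub_of_hasDerivAt_of_le ht.2 (by fun_prop)
    (fun x hx => hasDerivAt_mul_sqrt_sub_arccos ⟨by linarith [ht.1, hx.1], hx.2⟩)
    ((by fun_prop : Continuous fun x => 2 * √(r ^ 2 - x ^ 2)).intervalIntegrable _ _)]
  rcases (show -r ≤ r by linarith [ht.1, ht.2]).eq_or_lt with hr | hr
  · obtain rfl : r = 0 := by linarith
    simp
  · simp [div_self (show r ≠ 0 by linarith)]

theorem integral_two_mul_sqrt_sq_sub_sq_from_left {r t : ℝ} (ht : t ∈ Icc (-r) r) :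
    ∫ x in -r..t, 2 * √(r ^ 2 - x ^ 2) = r ^ 2 * arccos (-t / r) + t * √(r ^ 2 - t ^ 2) := by
  have hreflect :=
    intervalIntegral.integral_comp_neg (a := -t) (b := r) fun x => 2 * √(r ^ 2 - x ^ 2)
  simp only [neg_sq, neg_neg] at hreflect
  rw [← hreflect, integral_two_mul_sqrt_sq_sub_sq_to_right ⟨by linarith [ht.2], by linarith [ht.1]⟩,
    neg_sq]
  ring

section Lens

variable {r₁ r₂ b x₁ : ℝ}

theorem setOf_inter_disks_eq_setOf_sq_le_min :
    {p : ℝ × ℝ | p.1 ^ 2 + p.2 ^ 2 ≤ r₁ ^ 2 ∧ (p.1 + b) ^ 2 + p.2 ^ 2 ≤ r₂ ^ 2} =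
      {p | p.2 ^ 2 ≤ min (r₁ ^ 2 - p.1 ^ 2) (r₂ ^ 2 - (p.1 + b) ^ 2)} := by
  ext p
  simp only [mem_ofPred_eq, le_min_iff]
  constructor <;> rintro ⟨h, h'⟩ <;> constructor <;> linarith

theorem min_sq_sub_sq_eq_left_of_le (hb : 0 < b) (hx₁ : 2 * b * x₁ = r₂ ^ 2 - r₁ ^ 2 - b ^ 2)
    {x : ℝ} (hx : x ≤ x₁) : min (r₁ ^ 2 - x ^ 2) (r₂ ^ 2 - (x + b) ^ 2) = r₁ ^ 2 - x ^ 2 :=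
  min_eq_left (by nlinarith)

theorem min_sq_sub_sq_eq_right_of_le (hb : 0 < b) (hx₁ : 2 * b * x₁ = r₂ ^ 2 - r₁ ^ 2 - b ^ 2)
    {x : ℝ} (hx : x₁ ≤ x) :
    min (r₁ ^ 2 - x ^ 2) (r₂ ^ 2 - (x + b) ^ 2) = r₂ ^ 2 - (x + b) ^ 2 :=
  min_eq_right (by nlinarith)

theorem integral_sqrt_min_sq_sub_sq_left (hb : 0 < b)
    (hx₁ : 2 * b * x₁ = r₂ ^ 2 - r₁ ^ 2 - b ^ 2) (hmem : x₁ ∈ Icc (-r₁) r₁) :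
    ∫ x in -r₁..x₁, 2 * √(min (r₁ ^ 2 - x ^ 2) (r₂ ^ 2 - (x + b) ^ 2)) =
      r₁ ^ 2 * arccos (-x₁ / r₁) + x₁ * √(r₁ ^ 2 - x₁ ^ 2) := by
  rw [← integral_two_mul_sqrt_sq_sub_sq_from_left hmem]
  refine intervalIntegral.integral_congr fun x hx => ?_
  rw [uIcc_of_le hmem.1] at hx
  simp only [min_sq_sub_sq_eq_left_of_le hb hx₁ hx.2]

theorem integral_sqrt_min_sq_sub_sq_right (hb : 0 < b)
    (hx₁ : 2 * b * x₁ = r₂ ^ 2 - r₁ ^ 2 - b ^ 2) (hmem : b + x₁ ∈ Icc (-r₂) r₂) :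
    ∫ x in x₁..r₂ - b, 2 * √(min (r₁ ^ 2 - x ^ 2) (r₂ ^ 2 - (x + b) ^ 2)) =
      r₂ ^ 2 * arccos ((b + x₁) / r₂) - (b + x₁) * √(r₂ ^ 2 - (b + x₁) ^ 2) := by
  have hshift := intervalIntegral.integral_comp_add_right (a := x₁) (b := r₂ - b)
    (fun u => 2 * √(r₂ ^ 2 - u ^ 2)) b
  rw [sub_add_cancel, add_comm x₁] at hshift
  rw [← integral_two_mul_sqrt_sq_sub_sq_to_right hmem, ← hshift]
  refine intervalIntegral.integral_congr fun x hx => ?_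
  rw [uIcc_of_le (by linarith [hmem.2])] at hx
  simp only [min_sq_sub_sq_eq_right_of_le hb hx₁ hx.1]

end Lens

theorem two_disks_intersection_area_general (r₁ r₂ b : ℝ)
    (h₁ : |r₁ - r₂| < b) (h₂ : b < r₁ + r₂) :
    volume {p : ℝ × ℝ | p.1 ^ 2 + p.2 ^ 2 ≤ r₁ ^ 2 ∧ (p.1 + b) ^ 2 + p.2 ^ 2 ≤ r₂ ^ 2} =
      ENNReal.ofReal
        (Real.arccos ((b + (r₂ ^ 2 - r₁ ^ 2 - b ^ 2) / (2 * b)) / r₂) * r₂ ^ 2 +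
         Real.arccos (-((r₂ ^ 2 - r₁ ^ 2 - b ^ 2) / (2 * b)) / r₁) * r₁ ^ 2 -
         Real.sqrt (r₁ ^ 2 - ((r₂ ^ 2 - r₁ ^ 2 - b ^ 2) / (2 * b)) ^ 2) * b) := by
  obtain ⟨hb₁, hb₂⟩ := abs_lt.mp h₁
  have hb : 0 < b := by linarith
  set x₁ := (r₂ ^ 2 - r₁ ^ 2 - b ^ 2) / (2 * b)
  have hx₁ : 2 * b * x₁ = r₂ ^ 2 - r₁ ^ 2 - b ^ 2 := mul_div_cancel₀ _ (by positivity)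
  have hx₁_mem : x₁ ∈ Icc (-r₁) r₁ := by constructor <;> nlinarith
  have hx₂_mem : b + x₁ ∈ Icc (-r₂) r₂ := by constructor <;> nlinarith
  have hout : ∀ x ∉ Icc (-r₁) (r₂ - b), min (r₁ ^ 2 - x ^ 2) (r₂ ^ 2 - (x + b) ^ 2) ≤ 0 := by
    intro x hx
    rcases not_and_or.1 hx with hx | hx
    · exact (min_le_left _ _).trans (by nlinarith)
    · exact (min_le_right _ _).trans (by nlinarith)
  have hcont : Continuous fun x => 2 * √(min (r₁ ^ 2 - x ^ 2) (r₂ ^ 2 - (x + b) ^ 2)) := by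
    fun_prop
  have hρ : r₂ ^ 2 - (b + x₁) ^ 2 = r₁ ^ 2 - x₁ ^ 2 := by linear_combination -hx₁
  rw [setOf_inter_disks_eq_setOf_sq_le_min,
    volume_setOf_sq_le_eq_intervalIntegral (by fun_prop) (by linarith) hout,
    ← intervalIntegral.integral_add_adjacent_intervals (b := x₁) (hcont.intervalIntegrable _ _)
      (hcont.intervalIntegrable _ _), integral_sqrt_min_sq_sub_sq_left hb hx₁ hx₁_mem,
    integral_sqrt_min_sq_sub_sq_right hb hx₁ hx₂_mem, hρ]
  congr 1
  ring

theorem two_disks_intersection_area (r₁ r₂ b : ℝ) (hr₁ : 0 < r₁) (hr₂ : 0 < r₂) (hb : 0 < b)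
    (h₁ : |r₁ - r₂| < b) (h₂ : b < r₁ + r₂) :
    volume {p : ℝ × ℝ | p.1 ^ 2 + p.2 ^ 2 ≤ r₁ ^ 2 ∧ (p.1 + b) ^ 2 + p.2 ^ 2 ≤ r₂ ^ 2} =
      ENNReal.ofReal
        (Real.arccos ((b + (r₂ ^ 2 - r₁ ^ 2 - b ^ 2) / (2 * b)) / r₂) * r₂ ^ 2 +
         Real.arccos (-((r₂ ^ 2 - r₁ ^ 2 - b ^ 2) / (2 * b)) / r₁) * r₁ ^ 2 -
         Real.sqrt (r₁ ^ 2 - ((r₂ ^ 2 - r₁ ^ 2 - b ^ 2) / (2 * b)) ^ 2) * b) :=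
  two_disks_intersection_area_general r₁ r₂ b h₁ h₂
end

section
/- For a solid cone with apex at the origin, axis along positive z, half-aperture φ (0 < φ < π/2), and a solid sphere of radius R centered at (0,0,−d) with d < −R (apex strictly outside and below the sphere) and R ≥ |d|·sinφ, the intersection volume equals V_cap(R, R+Z₁+d) + (π/3)(Z₂−Z₁)(ρ₁² + ρ₁ρ₂ + ρ₂²) + V_cap(R, R−Z₂−d), where Z₁,₂ + d = ∓cosφ·√(R² − d²sin²φ) + d·sin²φ, ρᵢ = Zᵢ·tanφ, and V_cap(R,h) = (π/3)h²(3R−h). -/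
open Real MeasureTheory

lemma disk_volume (m : ℝ) :
    volume {q : ℝ × ℝ | q.1 ^ 2 + q.2 ^ 2 ≤ m} = ENNReal.ofReal (π * m) := by
  rcases lt_or_ge m 0 with hm | hm
  · have h0 : {q : ℝ × ℝ | q.1 ^ 2 + q.2 ^ 2 ≤ m} = ∅ := by
      ext q
      simp only [Set.mem_setOf_eq, Set.mem_empty_iff_false, iff_false, not_le]
      nlinarith [sq_nonneg q.1, sq_nonneg q.2]
    rw [h0, measure_empty, Eq.comm, ENNReal.ofReal_eq_zero]
    nlinarith [pi_pos]
  · have h1 : {q : ℝ × ℝ | q.1 ^ 2 + q.2 ^ 2 ≤ m}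
        = Complex.measurableEquivRealProd.symm ⁻¹' Metric.closedBall (0 : ℂ) (Real.sqrt m) := by
      ext q
      simp only [Set.mem_setOf_eq, Set.mem_preimage, Metric.mem_closedBall,
        Complex.dist_eq, sub_zero, Complex.measurableEquivRealProd_symm_apply]
      rw [Complex.norm_def, Complex.normSq_mk]
      rw [show q.1 * q.1 + q.2 * q.2 = q.1 ^ 2 + q.2 ^ 2 by ring]
      constructor
      · intro h
        exact Real.sqrt_le_sqrt h
      · intro h
        calc q.1 ^ 2 + q.2 ^ 2 = Real.sqrt (q.1 ^ 2 + q.2 ^ 2) ^ 2 := by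
              rw [Real.sq_sqrt (by positivity)]
          _ ≤ Real.sqrt m ^ 2 := by
              apply pow_le_pow_left₀ (Real.sqrt_nonneg _) h
          _ = m := Real.sq_sqrt hm
    rw [h1, (Complex.volume_preserving_equiv_real_prod.symm _).measure_preimage
      measurableSet_closedBall.nullMeasurableSet, Complex.volume_closedBall]
    rw [← ENNReal.ofReal_pow (Real.sqrt_nonneg m), Real.sq_sqrt hm]
    rw [show ((NNReal.pi : ENNReal)) = ENNReal.ofReal π by
      rw [ENNReal.ofReal, Real.toNNReal_of_nonneg Real.pi_pos.le]; rfl]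
    rw [← ENNReal.ofReal_mul hm, mul_comm]

lemma integral_sphere_slice (A B C e : ℝ) :
    ∫ z in A..B, (π * (C - (z + e) ^ 2)) =
      π * (C * (B - A) - ((B + e) ^ 3 - (A + e) ^ 3) / 3) := by
  have hderiv : ∀ z ∈ Set.uIcc A B, HasDerivAt (fun z => π * (C * z - (z + e) ^ 3 / 3))
      (π * (C - (z + e) ^ 2)) z := by
    intro z _
    have h1 : HasDerivAt (fun z : ℝ => C * z) C z := by
      simpa using (hasDerivAt_id z).const_mul C
    have h2 : HasDerivAt (fun z : ℝ => (z + e) ^ 3 / 3) ((z + e) ^ 2) z := by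
      have := ((hasDerivAt_id z).add_const e).pow 3
      simpa [mul_comm, mul_assoc, mul_div_assoc] using this.div_const 3
    simpa using ((h1.sub h2).const_mul π)
  rw [intervalIntegral.integral_eq_sub_of_hasDerivAt hderiv
    (Continuous.intervalIntegrable (by continuity) A B)]
  ring

lemma integral_cone_slice (A B c : ℝ) :
    ∫ z in A..B, (π * (c * z ^ 2)) = π * (c * (B ^ 3 - A ^ 3) / 3) := by
  have hderiv : ∀ z ∈ Set.uIcc A B, HasDerivAt (fun z => π * (c * z ^ 3 / 3))
      (π * (c * z ^ 2)) z := by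
    intro z _
    have h2 : HasDerivAt (fun z : ℝ => c * z ^ 3 / 3) (c * z ^ 2) z := by
      have := (hasDerivAt_pow 3 z).const_mul c
      have h := this.div_const 3
      simpa [mul_comm, mul_assoc, mul_div_assoc] using h
    simpa using h2.const_mul π
  rw [intervalIntegral.integral_eq_sub_of_hasDerivAt hderiv
    (Continuous.intervalIntegrable (by continuity) A B)]
  ring

set_option maxHeartbeats 1000000 in
theorem cone_sphere_apex_outside_volume (R d φ : ℝ) (hR : 0 < R) (hd : d < -R)
    (hφ0 : 0 < φ) (hφ1 : φ < π / 2) (hint : |d| * Real.sin φ ≤ R) :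
    volume {p : ℝ × ℝ × ℝ |
        0 ≤ p.2.2 ∧ p.1 ^ 2 + p.2.1 ^ 2 ≤ p.2.2 ^ 2 * Real.tan φ ^ 2 ∧
        p.1 ^ 2 + p.2.1 ^ 2 + (p.2.2 + d) ^ 2 ≤ R ^ 2} =
      ENNReal.ofReal
        (let Z₁ := -Real.cos φ * Real.sqrt (R ^ 2 - d ^ 2 * Real.sin φ ^ 2) + d * Real.sin φ ^ 2 - d
         let Z₂ := Real.cos φ * Real.sqrt (R ^ 2 - d ^ 2 * Real.sin φ ^ 2) + d * Real.sin φ ^ 2 - d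
         let ρ₁ := Z₁ * Real.tan φ
         let ρ₂ := Z₂ * Real.tan φ
         (π / 3) * (R + Z₁ + d) ^ 2 * (3 * R - (R + Z₁ + d)) +
           (π / 3) * (Z₂ - Z₁) * (ρ₁ ^ 2 + ρ₁ * ρ₂ + ρ₂ ^ 2) +
           (π / 3) * (R - Z₂ - d) ^ 2 * (3 * R - (R - Z₂ - d))) := by
  have hπ := Real.pi_pos
  have hc : 0 < Real.cos φ := Real.cos_pos_of_mem_Ioo ⟨by linarith, hφ1⟩
  have hsin0 : 0 < Real.sin φ := Real.sin_pos_of_pos_of_lt_pi hφ0 (by linarith)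
  have hsin1 : Real.sin φ ≤ 1 := Real.sin_le_one φ
  have hsc : Real.sin φ ^ 2 + Real.cos φ ^ 2 = 1 := Real.sin_sq_add_cos_sq φ
  have habs : |d| = -d := abs_of_neg (by linarith)
  have hint' : -d * Real.sin φ ≤ R := by rw [habs] at hint; linarith
  have htcs : Real.tan φ * Real.cos φ = Real.sin φ := by
    rw [Real.tan_eq_sin_div_cos]; field_simp
  set t := Real.tan φ with ht
  have hRd : 0 ≤ R ^ 2 - d ^ 2 * Real.sin φ ^ 2 := by
    have h1 : 0 ≤ -d * Real.sin φ := by nlinarith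
    nlinarith [hint', h1]
  set s := Real.sqrt (R ^ 2 - d ^ 2 * Real.sin φ ^ 2) with hsdef
  have hs2 : s ^ 2 = R ^ 2 - d ^ 2 * Real.sin φ ^ 2 := Real.sq_sqrt hRd
  have hsnn : 0 ≤ s := Real.sqrt_nonneg _
  set Z₁ : ℝ := -Real.cos φ * s + d * Real.sin φ ^ 2 - d with hZ1
  set Z₂ : ℝ := Real.cos φ * s + d * Real.sin φ ^ 2 - d with hZ2
  set a : ℝ := -d - R with hA
  set b : ℝ := -d + R with hB
  have hcs2' : Real.cos φ ^ 2 * s ^ 2 = Real.cos φ ^ 2 * (R ^ 2 - d ^ 2 * Real.sin φ ^ 2) := by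
    rw [hs2]
  have hRd1 : 0 ≤ R + d * Real.sin φ ^ 2 := by nlinarith
  have hRd2 : 0 ≤ R - d * Real.sin φ ^ 2 := by nlinarith
  have hcs1 : Real.cos φ * s ≤ R + d * Real.sin φ ^ 2 := by
    have hsq : (Real.cos φ * s) ^ 2 ≤ (R + d * Real.sin φ ^ 2) ^ 2 := by
      nlinarith [hcs2', hsc, sq_nonneg ((R + d) * Real.sin φ), sq_nonneg (Real.sin φ)]
    nlinarith [mul_nonneg hc.le hsnn, hRd1]
  have hcs2 : Real.cos φ * s ≤ R - d * Real.sin φ ^ 2 := by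
    have hsq : (Real.cos φ * s) ^ 2 ≤ (R - d * Real.sin φ ^ 2) ^ 2 := by
      nlinarith [hcs2', hsc, sq_nonneg ((R - d) * Real.sin φ), sq_nonneg (Real.sin φ)]
    nlinarith [mul_nonneg hc.le hsnn, hRd2]
  have haZ1 : a ≤ Z₁ := by rw [hA, hZ1]; linarith
  have hZZ : Z₁ ≤ Z₂ := by rw [hZ1, hZ2]; nlinarith [mul_nonneg hc.le hsnn]
  have hZb : Z₂ ≤ b := by rw [hZ2, hB]; linarith
  have hab : a ≤ b := le_trans haZ1 (le_trans hZZ hZb)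
  have hfact : ∀ z : ℝ, Real.cos φ ^ 2 * (z ^ 2 * t ^ 2 + (z + d) ^ 2 - R ^ 2)
      = (z - Z₁) * (z - Z₂) := by
    intro z
    rw [hZ1, hZ2]
    linear_combination (z ^ 2 * (t * Real.cos φ + Real.sin φ)) * htcs
      + Real.cos φ ^ 2 * hs2 + ((z + d) ^ 2 - d ^ 2 * Real.sin φ ^ 2) * hsc
  have hSm : MeasurableSet {p : ℝ × ℝ × ℝ |
      0 ≤ p.2.2 ∧ p.1 ^ 2 + p.2.1 ^ 2 ≤ p.2.2 ^ 2 * t ^ 2 ∧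
      p.1 ^ 2 + p.2.1 ^ 2 + (p.2.2 + d) ^ 2 ≤ R ^ 2} := by
    rw [Set.setOf_and, Set.setOf_and]
    refine MeasurableSet.inter ?_ (MeasurableSet.inter ?_ ?_)
    · exact measurableSet_le measurable_const (by fun_prop)
    · exact measurableSet_le (by fun_prop) (by fun_prop)
    · exact measurableSet_le (by fun_prop) measurable_const
  have hvol : volume {p : ℝ × ℝ × ℝ |
      0 ≤ p.2.2 ∧ p.1 ^ 2 + p.2.1 ^ 2 ≤ p.2.2 ^ 2 * t ^ 2 ∧
      p.1 ^ 2 + p.2.1 ^ 2 + (p.2.2 + d) ^ 2 ≤ R ^ 2}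
      = ∫⁻ z : ℝ, ENNReal.ofReal (π * min (z ^ 2 * t ^ 2) (R ^ 2 - (z + d) ^ 2)) := by
    rw [← (volume_preserving_prodAssoc).measure_preimage hSm.nullMeasurableSet]
    rw [show (volume : Measure ((ℝ × ℝ) × ℝ)) = (volume : Measure (ℝ × ℝ)).prod volume from rfl]
    rw [Measure.prod_apply_symm (MeasurableEquiv.prodAssoc.measurable hSm)]
    apply lintegral_congr
    intro z
    have hpre : ((fun x : ℝ × ℝ => (x, z)) ⁻¹'
        (⇑MeasurableEquiv.prodAssoc ⁻¹' {p : ℝ × ℝ × ℝ |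
          0 ≤ p.2.2 ∧ p.1 ^ 2 + p.2.1 ^ 2 ≤ p.2.2 ^ 2 * t ^ 2 ∧
          p.1 ^ 2 + p.2.1 ^ 2 + (p.2.2 + d) ^ 2 ≤ R ^ 2}))
        = {q : ℝ × ℝ | 0 ≤ z ∧ q.1 ^ 2 + q.2 ^ 2 ≤ z ^ 2 * t ^ 2 ∧
            q.1 ^ 2 + q.2 ^ 2 + (z + d) ^ 2 ≤ R ^ 2} := rfl
    rw [hpre]
    rcases le_or_gt 0 z with hz | hz
    · have heq : {q : ℝ × ℝ | 0 ≤ z ∧ q.1 ^ 2 + q.2 ^ 2 ≤ z ^ 2 * t ^ 2 ∧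
          q.1 ^ 2 + q.2 ^ 2 + (z + d) ^ 2 ≤ R ^ 2}
          = {q : ℝ × ℝ | q.1 ^ 2 + q.2 ^ 2 ≤ min (z ^ 2 * t ^ 2) (R ^ 2 - (z + d) ^ 2)} := by
        ext q
        simp only [Set.mem_setOf_eq, hz, true_and, le_min_iff]
        constructor
        · rintro ⟨h1, h2⟩; exact ⟨h1, by linarith⟩
        · rintro ⟨h1, h2⟩; exact ⟨h1, by linarith⟩
      rw [heq, disk_volume]
    · have heq : {q : ℝ × ℝ | 0 ≤ z ∧ q.1 ^ 2 + q.2 ^ 2 ≤ z ^ 2 * t ^ 2 ∧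
          q.1 ^ 2 + q.2 ^ 2 + (z + d) ^ 2 ≤ R ^ 2} = ∅ := by
        ext q
        simp only [Set.mem_setOf_eq, Set.mem_empty_iff_false, iff_false, not_and]
        intro h0; linarith
      rw [heq, measure_empty, Eq.comm, ENNReal.ofReal_eq_zero]
      have hzd : z + d < -R := by linarith
      have : R ^ 2 - (z + d) ^ 2 < 0 := by nlinarith
      nlinarith [min_le_right (z ^ 2 * t ^ 2) (R ^ 2 - (z + d) ^ 2), hπ]
  rw [hvol]
  have hfun0 : ∀ z ∉ Set.Icc a b,
      ENNReal.ofReal (π * min (z ^ 2 * t ^ 2) (R ^ 2 - (z + d) ^ 2)) = 0 := by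
    intro z hz
    rw [Set.mem_Icc, not_and_or, not_le, not_le] at hz
    apply ENNReal.ofReal_eq_zero.2
    have hneg : R ^ 2 - (z + d) ^ 2 < 0 := by
      rcases hz with h | h
      · rw [hA] at h; nlinarith
      · rw [hB] at h; nlinarith
    nlinarith [min_le_right (z ^ 2 * t ^ 2) (R ^ 2 - (z + d) ^ 2), hπ]
  have hstep1 : (∫⁻ z : ℝ, ENNReal.ofReal (π * min (z ^ 2 * t ^ 2) (R ^ 2 - (z + d) ^ 2)))
      = ∫⁻ z in Set.Icc a b, ENNReal.ofReal (π * min (z ^ 2 * t ^ 2) (R ^ 2 - (z + d) ^ 2)) := by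
    rw [← lintegral_indicator measurableSet_Icc]
    apply lintegral_congr
    intro z
    by_cases h : z ∈ Set.Icc a b
    · rw [Set.indicator_of_mem h]
    · rw [Set.indicator_of_notMem h, hfun0 z h]
  rw [hstep1]
  have hmc : Continuous fun z : ℝ => π * min (z ^ 2 * t ^ 2) (R ^ 2 - (z + d) ^ 2) := by
    apply continuous_const.mul
    exact Continuous.min ((continuous_id.pow 2).mul continuous_const)
      (continuous_const.sub ((continuous_id.add continuous_const).pow 2))
  have hnn : 0 ≤ᵐ[volume.restrict (Set.Icc a b)]
      fun z : ℝ => π * min (z ^ 2 * t ^ 2) (R ^ 2 - (z + d) ^ 2) := by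
    filter_upwards [ae_restrict_mem measurableSet_Icc] with z hz
    rw [Set.mem_Icc, hA, hB] at hz
    have h1 : 0 ≤ z ^ 2 * t ^ 2 := by positivity
    have h2 : 0 ≤ R ^ 2 - (z + d) ^ 2 := by nlinarith [hz.1, hz.2]
    have := le_min h1 h2
    positivity
  rw [← ofReal_integral_eq_lintegral_ofReal (hmc.integrableOn_Icc) hnn]
  rw [MeasureTheory.integral_Icc_eq_integral_Ioc, ← intervalIntegral.integral_of_le hab]
  have hii : ∀ A B : ℝ, IntervalIntegrable
      (fun z : ℝ => π * min (z ^ 2 * t ^ 2) (R ^ 2 - (z + d) ^ 2)) volume A B :=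
    fun A B => hmc.intervalIntegrable A B
  rw [← intervalIntegral.integral_add_adjacent_intervals (hii a Z₁) (hii Z₁ b)]
  rw [← intervalIntegral.integral_add_adjacent_intervals (hii Z₁ Z₂) (hii Z₂ b)]
  have e1 : (∫ z in a..Z₁, π * min (z ^ 2 * t ^ 2) (R ^ 2 - (z + d) ^ 2))
      = ∫ z in a..Z₁, π * (R ^ 2 - (z + d) ^ 2) := by
    apply intervalIntegral.integral_congr
    intro z hz
    rw [Set.uIcc_of_le haZ1, Set.mem_Icc] at hz
    have hp : 0 ≤ (z - Z₁) * (z - Z₂) :=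
      mul_nonneg_of_nonpos_of_nonpos (by linarith [hz.2]) (by linarith [hz.2, hZZ])
    have hf := hfact z
    rw [← hf] at hp
    have hle : R ^ 2 - (z + d) ^ 2 ≤ z ^ 2 * t ^ 2 := by
      have h2 := (mul_nonneg_iff_of_pos_left (by positivity : (0:ℝ) < Real.cos φ ^ 2)).1 hp
      linarith
    show π * min (z ^ 2 * t ^ 2) (R ^ 2 - (z + d) ^ 2) = π * (R ^ 2 - (z + d) ^ 2)
    rw [min_eq_right hle]
  have e2 : (∫ z in Z₁..Z₂, π * min (z ^ 2 * t ^ 2) (R ^ 2 - (z + d) ^ 2))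
      = ∫ z in Z₁..Z₂, π * (t ^ 2 * z ^ 2) := by
    apply intervalIntegral.integral_congr
    intro z hz
    rw [Set.uIcc_of_le hZZ, Set.mem_Icc] at hz
    have hp : (z - Z₁) * (z - Z₂) ≤ 0 :=
      mul_nonpos_of_nonneg_of_nonpos (by linarith [hz.1]) (by linarith [hz.2])
    have hf := hfact z
    rw [← hf] at hp
    have hle : z ^ 2 * t ^ 2 ≤ R ^ 2 - (z + d) ^ 2 := by
      have h2 := nonpos_of_mul_nonpos_right hp (by positivity : (0:ℝ) < Real.cos φ ^ 2)
      linarith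
    show π * min (z ^ 2 * t ^ 2) (R ^ 2 - (z + d) ^ 2) = π * (t ^ 2 * z ^ 2)
    rw [min_eq_left hle]
    ring
  have e3 : (∫ z in Z₂..b, π * min (z ^ 2 * t ^ 2) (R ^ 2 - (z + d) ^ 2))
      = ∫ z in Z₂..b, π * (R ^ 2 - (z + d) ^ 2) := by
    apply intervalIntegral.integral_congr
    intro z hz
    rw [Set.uIcc_of_le hZb, Set.mem_Icc] at hz
    have hp : 0 ≤ (z - Z₁) * (z - Z₂) :=
      mul_nonneg (by linarith [hz.1, hZZ]) (by linarith [hz.1])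
    have hf := hfact z
    rw [← hf] at hp
    have hle : R ^ 2 - (z + d) ^ 2 ≤ z ^ 2 * t ^ 2 := by
      have h2 := (mul_nonneg_iff_of_pos_left (by positivity : (0:ℝ) < Real.cos φ ^ 2)).1 hp
      linarith
    show π * min (z ^ 2 * t ^ 2) (R ^ 2 - (z + d) ^ 2) = π * (R ^ 2 - (z + d) ^ 2)
    rw [min_eq_right hle]
  rw [e1, e2, e3, integral_sphere_slice, integral_cone_slice, integral_sphere_slice]
  show _ = ENNReal.ofReal
      ((π / 3) * (R + Z₁ + d) ^ 2 * (3 * R - (R + Z₁ + d)) +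
        (π / 3) * (Z₂ - Z₁) * ((Z₁ * t) ^ 2 + (Z₁ * t) * (Z₂ * t) + (Z₂ * t) ^ 2) +
        (π / 3) * (R - Z₂ - d) ^ 2 * (3 * R - (R - Z₂ - d)))
  congr 1
  rw [hA, hB]
  ring
end
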